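/- Let f be a Boolean function in n variables and let A be an affine subspace of F_2^n with indicator function 1_A (the Boolean function with 1_A(x) = 1 if and only if x ∈ A). Then deg(f·1_A) = deg(f|_A) + deg(1_A), where deg(1_A) equals the co-dimension of A. Consequently, for 1 ≤ r ≤ n - k, a nonzero homogeneous Boolean function f of degree r in n variables has no degree-drop affine subspace of co-dimension k if and only if deg(f·1_A) = r + k for every affine subspace A of co-dimension k. -/

import Mathlib

open Finset

/-- A Boolean function in `n` variables. -/
abbrev BF (n : ℕ) := (Fin n → ZMod 2) → ZMod 2

/-- The coefficient, in the algebraic normal form of `f`, of the monomial whose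
set of variables is `S` (computed by the Möbius/binary Möbius transform). -/
def anf {n : ℕ} (f : BF n) (S : Finset (Fin n)) : ZMod 2 :=
  ∑ T ∈ S.powerset, f (fun i => if i ∈ T then 1 else 0)

/-- The algebraic degree of a Boolean function, with `⊥` (i.e. `-∞`) for the zero function. -/
def degB {n : ℕ} (f : BF n) : WithBot ℕ :=
  (Finset.univ.filter (fun S : Finset (Fin n) => anf f S ≠ 0)).sup
    (fun S => (S.card : WithBot ℕ))

/-- `f` is homogeneous of degree `r`: all monomials of its ANF have degree `r`. -/
def Homog {n : ℕ} (f : BF n) (r : ℕ) : Prop :=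
  ∀ S : Finset (Fin n), anf f S ≠ 0 → S.card = r

/-- `φ` is an affine map. -/
def IsAffineMap {n m : ℕ} (φ : (Fin m → ZMod 2) → (Fin n → ZMod 2)) : Prop :=
  ∃ (L : (Fin m → ZMod 2) →ₗ[ZMod 2] (Fin n → ZMod 2)) (b : Fin n → ZMod 2),
    φ = fun x => L x + b

/-- `A` is a degree-drop affine subspace of co-dimension `k` for `f` : `A` is the range of an
injective affine parametrization `φ` defined on `F_2^{n-k}`, and the restriction `f|_A`,
viewed as the Boolean function `f ∘ φ` in `n-k` variables, has degree `< deg f`. -/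
def DegreeDropSet {n : ℕ} (f : BF n) (k : ℕ) (A : Set (Fin n → ZMod 2)) : Prop :=
  ∃ φ : (Fin (n - k) → ZMod 2) → (Fin n → ZMod 2),
    IsAffineMap φ ∧ Function.Injective φ ∧ Set.range φ = A ∧ degB (f ∘ φ) < degB f

/-- `f` has some degree-drop affine subspace of co-dimension `k`. -/
def HasDDS {n : ℕ} (f : BF n) (k : ℕ) : Prop :=
  ∃ A : Set (Fin n → ZMod 2), DegreeDropSet f k A

/-- `SimEq r f g` is the relation `f ∼_{r-1} g` : there are an invertible affine
transformation `x ↦ L x + b` of `F_2^n` and a Boolean function `h` of degree at most `r-1`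
such that `g = f ∘ φ + h`. -/
def SimEq {n : ℕ} (r : ℕ) (f g : BF n) : Prop :=
  ∃ (L : (Fin n → ZMod 2) ≃ₗ[ZMod 2] (Fin n → ZMod 2)) (b : Fin n → ZMod 2) (h : BF n),
    degB h ≤ ((r - 1 : ℕ) : WithBot ℕ) ∧ g = fun x => f (L x + b) + h x

/-- The complement `f^c` of a (homogeneous) Boolean function: each monomial `m` of the ANF
is replaced by the monomial on the complementary set of variables. -/
def bcompl {n : ℕ} (f : BF n) : BF n :=
  fun x => ∑ S ∈ Finset.univ.filter (fun S : Finset (Fin n) => anf f S ≠ 0), ∏ i ∈ Sᶜ, x i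

/-- Discrete derivative of `f` in direction `a`. -/
def deriv1 {n : ℕ} (a : Fin n → ZMod 2) (f : BF n) : BF n :=
  fun x => f (x + a) + f x

/-- `a` is a fast point of `f` : `a ≠ 0` and `deg (D_a f) < deg f - 1`. -/
def FastPoint {n : ℕ} (f : BF n) (a : Fin n → ZMod 2) : Prop :=
  a ≠ 0 ∧ degB (deriv1 a f) + 1 < degB f

/-- Membership in `K_{k,r,n}` : `f` is a nonzero homogeneous Boolean function of degree `r`
in `n` variables with no degree-drop affine subspace of co-dimension `k`. -/
def memK {n : ℕ} (k r : ℕ) (f : BF n) : Prop :=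
  Homog f r ∧ degB f = (r : WithBot ℕ) ∧ ¬ HasDDS f k

/-- The restriction degree stability of `f` : the largest `k` such that `f` has no
degree-drop affine subspace of co-dimension `k`. -/
noncomputable def degStab {n : ℕ} (f : BF n) : ℕ :=
  sSup {k : ℕ | ¬ HasDDS f k}

/-- `deg_stab(r,n)` : the maximum of `degStab f` over all Boolean functions `f` of
degree `r` in `n` variables. -/
noncomputable def degStabRN (r n : ℕ) : ℕ :=
  sSup {d : ℕ | ∃ f : BF n, degB f = (r : WithBot ℕ) ∧ d = degStab f}

/-- `g` depends only on the variables in `S`. -/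
def DependsOnlyOn {n : ℕ} (g : BF n) (S : Finset (Fin n)) : Prop :=
  ∀ x y : Fin n → ZMod 2, (∀ i ∈ S, x i = y i) → g x = g y

/-- `rank_{r-1}(f)` : the minimum `m` such that some Boolean function `g` depending on only
`m` of the variables satisfies `f ∼_{r-1} g`. -/
noncomputable def rankB {n : ℕ} (r : ℕ) (f : BF n) : ℕ :=
  sInf {m : ℕ | ∃ g : BF n, SimEq r f g ∧
    ∃ S : Finset (Fin n), S.card = m ∧ DependsOnlyOn g S}

/-- Iterated discrete derivative `D_{a_1}(D_{a_2}(⋯ D_{a_k} f))` along a list of directions. -/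
def derivList {n : ℕ} : List (Fin n → ZMod 2) → BF n → BF n
  | [], f => f
  | a :: l, f => deriv1 a (derivList l f)

/-! Write `A` as the image of an injective affine map `t ↦ L t + b`. The linear part `L` extends
to a linear automorphism `M` of `F₂ⁿ` carrying the coordinate subspace `E = F₂^{n-k} × 0` onto the
direction of `A`, and substituting the affine automorphism `x ↦ M x + b` preserves the degree:
no affine substitution can raise it, since a product of `d` affine forms has degree at most `d`.
On `E` the computation is explicit: the ANF coefficient of `f · 1_E` at `S` is the coefficient of
`f` at the part of `S` inside the first `n - k` coordinates. So the monomials of `f · 1_E` are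
those of `f|_E` with any set of the last `k` variables adjoined, and the degree is attained by
adjoining all `k` of them. The equivalence for homogeneous `f` follows because
`deg (f|_A) ≤ deg f` always holds. -/

open Function

def charVec {n : ℕ} (T : Finset (Fin n)) : Fin n → ZMod 2 := fun i => if i ∈ T then 1 else 0

def anfSupport {n : ℕ} (f : BF n) : Finset (Finset (Fin n)) := univ.filter (fun S => anf f S ≠ 0)

section ANF

variable {n : ℕ}

lemma anf_eq_sum_charVec (f : BF n) (S : Finset (Fin n)) :
    anf f S = ∑ T ∈ S.powerset, f (charVec T) := rfl

lemma mem_anfSupport {f : BF n} {S : Finset (Fin n)} : S ∈ anfSupport f ↔ anf f S ≠ 0 := by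
  simp [anfSupport]

lemma charVec_surjective : Surjective (charVec (n := n)) := by
  intro x
  refine ⟨univ.filter (fun i => x i = 1), funext fun i => ?_⟩
  have : x i = 0 ∨ x i = 1 := by generalize x i = a; revert a; decide
  rcases this with h | h <;> simp [charVec, h]

lemma prod_charVec (W T : Finset (Fin n)) :
    ∏ i ∈ W, charVec T i = if W ⊆ T then 1 else 0 := by
  simp only [charVec, prod_ite_zero, prod_const_one, subset_iff]

lemma natCast_card_Icc_finset_zmod_two {α : Type*} [DecidableEq α] (U T : Finset α) :
    ((Icc U T).card : ZMod 2) = if U = T then 1 else 0 := by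
  by_cases hUT : U ⊆ T
  · rw [card_Icc_finset hUT]
    split_ifs with h
    · simp [h]
    · have : T.card - U.card ≠ 0 :=
        (Nat.sub_pos_of_lt (card_lt_card (ssubset_of_subset_of_ne hUT h))).ne'
      simp [this, show (2 : ZMod 2) = 0 from rfl]
  · rw [Icc_eq_empty (fun h => hUT h), if_neg (by rintro rfl; exact hUT subset_rfl)]
    simp

lemma anf_monomial (W S : Finset (Fin n)) :
    anf (fun x => ∏ i ∈ W, x i) S = if W = S then 1 else 0 := by
  have : S.powerset.filter (W ⊆ ·) = Icc W S := by
    ext T; simp [and_comm]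
  rw [anf_eq_sum_charVec]
  simp_rw [prod_charVec]
  rw [sum_ite, sum_const_zero, add_zero, sum_const, nsmul_one, this,
    natCast_card_Icc_finset_zmod_two]

lemma sum_anf_powerset (f : BF n) (T : Finset (Fin n)) :
    ∑ S ∈ T.powerset, anf f S = f (charVec T) := by
  simp_rw [anf_eq_sum_charVec]
  rw [sum_comm' (t' := T.powerset) (s' := fun U => Icc U T) (by intros; simp; tauto)]
  simp_rw [sum_const, nsmul_eq_mul, natCast_card_Icc_finset_zmod_two, ite_mul, one_mul, zero_mul]
  rw [sum_ite_eq', if_pos (mem_powerset_self T)]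

lemma eq_sum_anfSupport (f : BF n) (x : Fin n → ZMod 2) :
    f x = ∑ U ∈ anfSupport f, ∏ i ∈ U, x i := by
  obtain ⟨T, rfl⟩ := charVec_surjective x
  have hone : ∀ S ∈ T.powerset.filter (fun S => anf f S ≠ 0), anf f S = 1 :=
    fun S hS => Fin.eq_one_of_ne_zero _ (mem_filter.1 hS).2
  simp_rw [prod_charVec, ← sum_anf_powerset, ← sum_filter_ne_zero (s := T.powerset), sum_ite,
    sum_const_zero, add_zero, sum_congr rfl hone]
  congr 1
  ext S; simp [anfSupport, and_comm]

lemma le_degB {f : BF n} {S : Finset (Fin n)} (h : anf f S ≠ 0) : (S.card : WithBot ℕ) ≤ degB f :=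
  le_sup (f := fun S : Finset (Fin n) => (S.card : WithBot ℕ)) (mem_anfSupport.2 h)

lemma degB_le_iff {f : BF n} {d : WithBot ℕ} :
    degB f ≤ d ↔ ∀ S, anf f S ≠ 0 → (S.card : WithBot ℕ) ≤ d := by
  simp [degB]

lemma degB_eq_bot_or_exists (f : BF n) :
    degB f = ⊥ ∨ ∃ S, anf f S ≠ 0 ∧ degB f = S.card := by
  rcases (anfSupport f).eq_empty_or_nonempty with h | h
  · exact Or.inl (by rw [degB, ← anfSupport, h, sup_empty])
  · obtain ⟨S, hS, hsup⟩ := exists_mem_eq_sup _ h (fun S : Finset (Fin n) => (S.card : WithBot ℕ))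
    exact Or.inr ⟨S, mem_anfSupport.1 hS, hsup⟩

lemma degB_add_le (f g : BF n) : degB (fun x => f x + g x) ≤ max (degB f) (degB g) := by
  refine degB_le_iff.2 fun S hS => ?_
  rw [anf_eq_sum_charVec, sum_add_distrib] at hS
  by_cases hf : anf f S = 0
  · have hg : anf g S ≠ 0 := by rw [anf_eq_sum_charVec] at hf ⊢; simpa [hf] using hS
    exact (le_degB hg).trans (le_max_right _ _)
  · exact (le_degB hf).trans (le_max_left _ _)

lemma degB_sum_le {ι : Type*} (s : Finset ι) (g : ι → BF n) {d : WithBot ℕ}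
    (h : ∀ i ∈ s, degB (g i) ≤ d) : degB (fun x => ∑ i ∈ s, g i x) ≤ d := by
  refine degB_le_iff.2 fun S hS => ?_
  rw [anf_eq_sum_charVec, sum_comm] at hS
  obtain ⟨i, hi, hne⟩ := exists_ne_zero_of_sum_ne_zero hS
  exact (le_degB hne).trans (h i hi)

lemma degB_const_mul_le (c : ZMod 2) (f : BF n) : degB (fun x => c * f x) ≤ degB f := by
  refine degB_le_iff.2 fun S hS => le_degB fun hf => hS ?_
  rw [anf_eq_sum_charVec, ← mul_sum, ← anf_eq_sum_charVec, hf, mul_zero]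

lemma degB_monomial_le (W : Finset (Fin n)) : degB (fun x => ∏ i ∈ W, x i) ≤ W.card := by
  refine degB_le_iff.2 fun S hS => ?_
  rw [anf_monomial] at hS
  rw [show W = S by by_contra h; simp [h] at hS]

lemma degB_one : degB (fun _ : Fin n → ZMod 2 => (1 : ZMod 2)) = 0 := by
  refine le_antisymm ?_ ?_
  · simpa using degB_monomial_le (n := n) ∅
  · have h := anf_monomial (n := n) ∅ ∅
    simp only [prod_empty, if_true] at h
    exact le_degB (S := ∅) (h.symm ▸ one_ne_zero)

lemma prod_mul_prod_eq_prod_union (U V : Finset (Fin n)) (x : Fin n → ZMod 2) :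
    (∏ i ∈ U, x i) * ∏ i ∈ V, x i = ∏ i ∈ U ∪ V, x i := by
  obtain ⟨T, rfl⟩ := charVec_surjective x
  simp only [prod_charVec, union_subset_iff, ite_and]
  split_ifs <;> simp

lemma degB_mul_le (f g : BF n) : degB (fun x => f x * g x) ≤ degB f + degB g := by
  have hfg : (fun x => f x * g x) =
      fun x => ∑ U ∈ anfSupport f, ∑ V ∈ anfSupport g, ∏ i ∈ U ∪ V, x i := by
    funext x
    rw [eq_sum_anfSupport f, eq_sum_anfSupport g, sum_mul_sum]
    simp_rw [prod_mul_prod_eq_prod_union]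
  rw [hfg]
  refine degB_sum_le _ _ fun U hU => degB_sum_le _ _ fun V hV => ?_
  calc degB (fun x => ∏ i ∈ U ∪ V, x i) ≤ (U ∪ V).card := degB_monomial_le _
    _ ≤ ((U.card + V.card : ℕ) : WithBot ℕ) := by exact_mod_cast card_union_le U V
    _ ≤ degB f + degB g := by
      rw [Nat.cast_add]
      exact add_le_add (le_degB (mem_anfSupport.1 hU)) (le_degB (mem_anfSupport.1 hV))

lemma degB_prod_le {ι : Type*} [DecidableEq ι] (s : Finset ι) (g : ι → BF n) :
    degB (fun x => ∏ i ∈ s, g i x) ≤ ∑ i ∈ s, degB (g i) := by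
  induction s using Finset.induction_on with
  | empty => simp [degB_one]
  | insert a s ha ih =>
    simp only [prod_insert ha, sum_insert ha]
    exact (degB_mul_le (g a) _).trans (add_le_add le_rfl ih)

end ANF

section Affine

variable {m n : ℕ}

lemma degB_affine_coord_le_one (L : (Fin m → ZMod 2) →ₗ[ZMod 2] (Fin n → ZMod 2))
    (b : Fin n → ZMod 2) (i : Fin n) : degB (fun x => (L x + b) i) ≤ 1 := by
  have hL : (fun x => (L x + b) i) =
      fun x => ∑ j, L (fun l => if j = l then 1 else 0) i * ∏ l ∈ {j}, x l + b i * 1 := by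
    funext x
    rw [Pi.add_apply, L.pi_apply_eq_sum_univ x]
    simp [Finset.sum_apply, mul_comm]
  rw [hL]
  refine (degB_add_le _ _).trans (max_le ?_ ?_)
  · refine degB_sum_le _ _ fun j _ => (degB_const_mul_le _ _).trans ?_
    simpa using degB_monomial_le {j}
  · exact (degB_const_mul_le _ _).trans (degB_one.trans_le zero_le_one)

lemma IsAffineMap.degB_comp_le {φ : (Fin m → ZMod 2) → (Fin n → ZMod 2)} (hφ : IsAffineMap φ)
    (f : BF n) : degB (f ∘ φ) ≤ degB f := by
  obtain ⟨L, b, rfl⟩ := hφ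
  have hf : f ∘ (fun x => L x + b) = fun x => ∑ U ∈ anfSupport f, ∏ i ∈ U, (L x + b) i :=
    funext fun x => eq_sum_anfSupport f _
  rw [hf]
  refine degB_sum_le _ _ fun U hU => ?_
  calc degB (fun x => ∏ i ∈ U, (L x + b) i)
      ≤ ∑ i ∈ U, degB (fun x => (L x + b) i) := degB_prod_le U _
    _ ≤ ∑ _i ∈ U, 1 := sum_le_sum fun i _ => degB_affine_coord_le_one L b i
    _ = U.card := by simp
    _ ≤ degB f := le_degB (mem_anfSupport.1 hU)

lemma degB_comp_affineEquiv (f : BF n) (M : (Fin n → ZMod 2) ≃ₗ[ZMod 2] (Fin n → ZMod 2))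
    (b : Fin n → ZMod 2) : degB (fun x => f (M x + b)) = degB f := by
  refine le_antisymm (IsAffineMap.degB_comp_le ⟨M.toLinearMap, b, rfl⟩ f) ?_
  have hinv : f = (fun x => f (M x + b)) ∘ fun y => M.symm.toLinearMap y + -M.symm b := by
    funext y; simp
  conv_lhs => rw [hinv]
  exact IsAffineMap.degB_comp_le ⟨M.symm.toLinearMap, -M.symm b, rfl⟩ _

end Affine

section CoordinateSubspace

variable {m n : ℕ} {e : Fin m → Fin n}

lemma extendByZero_charVec (he : Injective e) (U : Finset (Fin m)) :
    ExtendByZero.linearMap (ZMod 2) e (charVec U) = charVec (U.image e) := by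
  funext i
  rw [ExtendByZero.linearMap_apply]
  by_cases hi : ∃ j, e j = i
  · obtain ⟨j, rfl⟩ := hi
    simp [he.extend_apply, charVec, he.eq_iff]
  · have hiU : i ∉ U.image e := fun hiU => hi ((mem_image.1 hiU).imp fun _ => And.right)
    rw [extend_apply' _ _ _ hi, charVec, if_neg hiU, Pi.zero_apply]

lemma anf_comp_extendByZero (he : Injective e) (h : BF n) (U : Finset (Fin m)) :
    anf (fun t => h (ExtendByZero.linearMap (ZMod 2) e t)) U = anf h (U.image e) := by
  simp only [anf_eq_sum_charVec, extendByZero_charVec he, powerset_image]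
  rw [sum_image fun V _ W _ hVW => image_injective he hVW]

lemma image_filter_mem (S : Finset (Fin n)) :
    (univ.filter (fun j => e j ∈ S)).image e = S ∩ univ.image e := by
  ext i; simp only [mem_image, mem_filter, mem_univ, true_and, mem_inter]; aesop

lemma charVec_mem_range_extendByZero (he : Injective e) (T : Finset (Fin n)) :
    charVec T ∈ Set.range (ExtendByZero.linearMap (ZMod 2) e) ↔ T ⊆ univ.image e := by
  constructor
  · rintro ⟨t, ht⟩ i hi
    by_contra hne
    have h0 := congrFun ht i
    rw [ExtendByZero.linearMap_apply, extend_apply' _ _ _ (by simpa using hne)] at h0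
    simp [charVec, hi] at h0
  · intro hT
    refine ⟨charVec (univ.filter (fun j => e j ∈ T)), ?_⟩
    rw [extendByZero_charVec he, image_filter_mem, inter_eq_left.2 hT]

lemma anf_mul_indicator_range_extendByZero (he : Injective e) (h : BF n)
    (S : Finset (Fin n)) :
    anf (fun x => h x * (Set.range (ExtendByZero.linearMap (ZMod 2) e)).indicator
      (fun _ => (1 : ZMod 2)) x) S = anf h (S ∩ univ.image e) := by
  simp only [anf_eq_sum_charVec, Set.indicator_apply, charVec_mem_range_extendByZero he,
    mul_ite, mul_one, mul_zero]
  rw [← sum_filter]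
  congr 1
  ext T; simp only [mem_filter, mem_powerset, subset_inter_iff]

lemma degB_mul_indicator_range_extendByZero (he : Injective e) (h : BF n) :
    degB (fun x => h x * (Set.range (ExtendByZero.linearMap (ZMod 2) e)).indicator
      (fun _ => (1 : ZMod 2)) x)
      = degB (fun t => h (ExtendByZero.linearMap (ZMod 2) e t)) + (n - m : ℕ) := by
  set E : Finset (Fin n) := univ.image e
  have hE : Eᶜ.card = n - m := by rw [card_compl, card_image_of_injective _ he]; simp
  apply le_antisymm
  · refine degB_le_iff.2 fun S hS => ?_
    rw [anf_mul_indicator_range_extendByZero he, ← image_filter_mem,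
      ← anf_comp_extendByZero he] at hS
    have hcard : S.card ≤ (univ.filter (e · ∈ S)).card + (n - m) := by
      rw [← card_inter_add_card_sdiff S E, ← image_filter_mem, card_image_of_injective _ he, ← hE]
      exact Nat.add_le_add_left (card_le_card fun i hi => mem_compl.2 (mem_sdiff.1 hi).2) _
    calc (S.card : WithBot ℕ) ≤ ((univ.filter (e · ∈ S)).card + (n - m) : ℕ) := by
          exact_mod_cast hcard
      _ ≤ _ := by rw [Nat.cast_add]; exact add_le_add_left (le_degB hS) _
  · rcases degB_eq_bot_or_exists (fun t => h (ExtendByZero.linearMap (ZMod 2) e t))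
      with hbot | ⟨U, hU, hdeg⟩
    · simp [hbot]
    · have hUE : U.image e ⊆ E := image_subset_image (subset_univ U)
      have hS : (U.image e ∪ Eᶜ) ∩ E = U.image e := by
        rw [union_inter_distrib_right, inter_comm Eᶜ, inter_compl, union_empty, inter_eq_left.2 hUE]
      have hle := le_degB (S := U.image e ∪ Eᶜ) (f := fun x => h x *
        (Set.range (ExtendByZero.linearMap (ZMod 2) e)).indicator (fun _ => 1) x)
        (by rwa [anf_mul_indicator_range_extendByZero he, hS, ← anf_comp_extendByZero he])
      rwa [card_union_of_disjoint (disjoint_compl_right.mono_left hUE),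
        card_image_of_injective _ he, hE, Nat.cast_add, ← hdeg] at hle

end CoordinateSubspace

lemma exists_linearEquiv_comp_eq {K V W : Type*} [Field K] [AddCommGroup V] [Module K V]
    [AddCommGroup W] [Module K W] [FiniteDimensional K V] {J L : W →ₗ[K] V}
    (hJ : Injective J) (hL : Injective L) :
    ∃ M : V ≃ₗ[K] V, ∀ t, M (J t) = L t := by
  obtain ⟨M, hM⟩ := Submodule.exists_linearEquiv_restrict_eq
    ((LinearEquiv.ofInjective J hJ).symm.trans (LinearEquiv.ofInjective L hL))
  exact ⟨M, fun t => by simpa using (hM (LinearEquiv.ofInjective J hJ t)).symm⟩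

lemma degB_mul_indicator_range {m n : ℕ} (f : BF n)
    {φ : (Fin m → ZMod 2) → (Fin n → ZMod 2)} (hφ : IsAffineMap φ) (hinj : Injective φ) :
    degB (fun x => f x * (Set.range φ).indicator (fun _ => (1 : ZMod 2)) x)
      = degB (f ∘ φ) + (n - m : ℕ) := by
  obtain ⟨L, b, rfl⟩ := hφ
  have hL : Injective L := fun s t hst => hinj (by simp only [hst])
  have hmn : m ≤ n := by simpa using LinearMap.finrank_le_finrank_of_injective hL
  have he := Fin.castLE_injective hmn
  obtain ⟨M, hM⟩ := exists_linearEquiv_comp_eq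
    (J := ExtendByZero.linearMap (ZMod 2) (Fin.castLE hmn))
    (extend_injective he 0) hL
  have hmem : ∀ x, M x + b ∈ Set.range (fun t => L t + b) ↔
      x ∈ Set.range (ExtendByZero.linearMap (ZMod 2) (Fin.castLE hmn)) := by
    intro x
    simp only [Set.mem_range, add_left_inj, ← hM, M.injective.eq_iff]
  calc _ = degB (fun x => f (M x + b) *
          (Set.range fun t => L t + b).indicator (fun _ => (1 : ZMod 2)) (M x + b)) :=
        (degB_comp_affineEquiv
          (fun y => f y * (Set.range fun t => L t + b).indicator (fun _ => 1) y) M b).symm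
    _ = degB (fun x => f (M x + b) *
          (Set.range (ExtendByZero.linearMap (ZMod 2) (Fin.castLE hmn))).indicator
            (fun _ => (1 : ZMod 2)) x) := by
        simp only [Set.indicator_apply, hmem]
    _ = degB (fun t => f (M (ExtendByZero.linearMap (ZMod 2) (Fin.castLE hmn) t) + b))
          + (n - m : ℕ) :=
        degB_mul_indicator_range_extendByZero he (fun y => f (M y + b))
    _ = _ := by simp only [hM]; rfl

lemma not_hasDDS_iff {n : ℕ} (f : BF n) (k : ℕ) :
    ¬ HasDDS f k ↔ ∀ φ : (Fin (n - k) → ZMod 2) → (Fin n → ZMod 2),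
      IsAffineMap φ → Injective φ → degB f ≤ degB (f ∘ φ) := by
  simp only [HasDDS, DegreeDropSet, not_exists, not_and, not_lt]
  exact ⟨fun h φ hφ hinj => h _ φ hφ hinj rfl, fun h _ φ hφ hinj _ => h φ hφ hinj⟩

/-- STATEMENT 19: for any Boolean function `f` and any affine subspace `A` of co-dimension
`k` (given by an injective affine parametrization `φ` of `F₂^{n-k}`, so that `A = range φ`
and `f|_A = f ∘ φ`), we have `deg (f·1_A) = deg (f|_A) + deg (1_A)` and `deg (1_A) = k`.
Consequently, for `1 ≤ r ≤ n - k`, a nonzero homogeneous `f` of degree `r` has no degree-drop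
affine subspace of co-dimension `k` iff `deg (f·1_A) = r + k` for every affine subspace `A`
of co-dimension `k`. -/
theorem stmt19 {n k : ℕ} (hk : k ≤ n) :
    (∀ f : BF n, ∀ φ : (Fin (n - k) → ZMod 2) → (Fin n → ZMod 2),
      IsAffineMap φ → Function.Injective φ →
      degB (fun x => f x * (Set.range φ).indicator (fun _ => (1 : ZMod 2)) x)
          = degB (f ∘ φ) + (k : WithBot ℕ) ∧
      degB (fun x => (Set.range φ).indicator (fun _ => (1 : ZMod 2)) x)
          = (k : WithBot ℕ)) ∧
    (∀ r : ℕ, 1 ≤ r → r ≤ n - k → ∀ f : BF n, Homog f r → degB f = (r : WithBot ℕ) →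
      (¬ HasDDS f k ↔
        ∀ φ : (Fin (n - k) → ZMod 2) → (Fin n → ZMod 2),
          IsAffineMap φ → Function.Injective φ →
          degB (fun x => f x * (Set.range φ).indicator (fun _ => (1 : ZMod 2)) x)
            = ((r + k : ℕ) : WithBot ℕ))) := by
  have hmul : ∀ (f : BF n) (φ : (Fin (n - k) → ZMod 2) → (Fin n → ZMod 2)), IsAffineMap φ →
      Function.Injective φ → degB (fun x => f x * (Set.range φ).indicator (fun _ => 1) x)
        = degB (f ∘ φ) + (k : WithBot ℕ) := fun f φ hφ hinj => by
    rw [degB_mul_indicator_range f hφ hinj, Nat.sub_sub_self hk]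
  refine ⟨fun f φ hφ hinj => ⟨hmul f φ hφ hinj, ?_⟩, fun r _ _ f _ hdeg => ?_⟩
  · simpa [Function.comp_def, degB_one] using hmul (fun _ => 1) φ hφ hinj
  · rw [not_hasDDS_iff]
    refine forall₂_congr fun φ hφ => forall_congr' fun hinj => ?_
    rw [hmul f φ hφ hinj, Nat.cast_add, WithBot.add_right_inj (z := (k : WithBot ℕ)) (by simp),
      ← hdeg]
    exact (hφ.degB_comp_le f).ge_iff_eq
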